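/- For α > 2 and exponential fading H ~ Exp(1) with independent power p, ∫₀^∞ (1 - E[exp(-s p H r^{-α})]) · 2πλ r dr = (πλ/sinc(2/α)) · E[p^{2/α}] · s^{2/α}. -/

import Mathlib

open MeasureTheory ProbabilityTheory Real

open Set Filter Topology

-- integrability helper: bounded on Ioc 0 1, dominated by C * r^σ on Ioi 1
lemma integrableOn_Ioi_of_bounds {f : ℝ → ℝ} (hm : AEStronglyMeasurable f (volume.restrict (Ioi 0)))
    {M C σ : ℝ} (hσ : σ < -1)
    (h1 : ∀ r ∈ Ioc (0:ℝ) 1, ‖f r‖ ≤ M) (h2 : ∀ r ∈ Ioi (1:ℝ), ‖f r‖ ≤ C * r ^ σ) :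
    IntegrableOn f (Ioi 0) := by
  have hsplit : Ioi (0:ℝ) = Ioc 0 1 ∪ Ioi 1 := by
    rw [Ioc_union_Ioi_eq_Ioi]; norm_num
  rw [hsplit]
  apply IntegrableOn.union
  · refine Integrable.mono' (integrable_const M) (hm.mono_set (by rw [hsplit]; exact subset_union_left)) ?_
    exact (ae_restrict_iff' measurableSet_Ioc).2 (ae_of_all _ h1)
  · refine Integrable.mono' ((integrableOn_Ioi_rpow_of_lt hσ one_pos).const_mul C)
      (hm.mono_set (by rw [hsplit]; exact subset_union_right)) ?_
    exact (ae_restrict_iff' measurableSet_Ioi).2 (ae_of_all _ h2)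

lemma exp_neg_le_inv {x : ℝ} (hx : 0 < x) : Real.exp (-x) ≤ x⁻¹ := by
  rw [Real.exp_neg]
  exact inv_anti₀ hx (by linarith [Real.add_one_le_exp x])

lemma g_meas (α b : ℝ) : Measurable (fun r : ℝ => r ^ (1-α) * Real.exp (-(b * r ^ (-α)))) := by
  fun_prop

lemma L2 {α b : ℝ} (hα : 2 < α) (hb : 0 < b) :
    IntegrableOn (fun r : ℝ => r ^ (1-α) * Real.exp (-(b * r ^ (-α)))) (Ioi 0) ∧
    ∫ r in Ioi (0:ℝ), r ^ (1-α) * Real.exp (-(b * r ^ (-α)))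
      = b ^ (-(α-2)/α) * (1/α) * Real.Gamma ((α-2)/α) := by
  constructor
  · apply integrableOn_Ioi_of_bounds ((g_meas α b).aestronglyMeasurable) (σ := 1 - α)
      (M := b⁻¹) (C := 1) (by linarith)
    · intro r hr
      have hr0 : 0 < r := hr.1
      have hra : 0 < r ^ (-α) := rpow_pos_of_pos hr0 _
      have h1 : Real.exp (-(b * r ^ (-α))) ≤ (b * r ^ (-α))⁻¹ := exp_neg_le_inv (by positivity)
      rw [norm_of_nonneg (by positivity)]
      calc r ^ (1-α) * Real.exp (-(b * r ^ (-α))) ≤ r ^ (1-α) * (b * r ^ (-α))⁻¹ := by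
            apply mul_le_mul_of_nonneg_left h1 (by positivity)
        _ = b⁻¹ * r := by
            rw [mul_inv, ← rpow_neg hr0.le, neg_neg, ← mul_assoc, mul_comm (r ^ (1-α)),
              mul_assoc, ← rpow_add hr0]
            norm_num
        _ ≤ b⁻¹ := by nlinarith [hr.2, inv_pos.2 hb]
    · intro r hr
      have hr0 : (0:ℝ) < r := lt_trans one_pos hr
      rw [norm_of_nonneg (by positivity), one_mul]
      calc r ^ (1-α) * Real.exp (-(b * r ^ (-α))) ≤ r ^ (1-α) * 1 := by
            apply mul_le_mul_of_nonneg_left _ (by positivity)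
            rw [Real.exp_le_one_iff]
            have : 0 < r ^ (-α) := rpow_pos_of_pos hr0 _
            nlinarith
        _ = r ^ (1-α) := mul_one _
  · have key := integral_comp_rpow_Ioi
      (fun y : ℝ => y ^ (1-α) * Real.exp (-(b * y ^ (-α)))) (p := -1) (by norm_num)
    rw [← key]
    have : ∀ x ∈ Ioi (0:ℝ), (|(-1:ℝ)| * x ^ ((-1:ℝ) - 1)) •
        ((x ^ (-1:ℝ)) ^ (1-α) * Real.exp (-(b * (x ^ (-1:ℝ)) ^ (-α))))
        = x ^ (α - 3) * Real.exp (-b * x ^ α) := by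
      intro x hx
      have hx0 : (0:ℝ) < x := hx
      have e1 : (x ^ (-1:ℝ)) ^ (1-α) = x ^ (α-1) := by
        rw [← Real.rpow_mul hx0.le]; congr 1; ring
      have e2 : (x ^ (-1:ℝ)) ^ (-α) = x ^ α := by
        rw [← Real.rpow_mul hx0.le]; congr 1; ring
      rw [e1, e2, abs_neg, abs_one, one_mul, smul_eq_mul, ← mul_assoc,
        ← Real.rpow_add hx0, neg_mul]
      congr 2
      ring
    rw [setIntegral_congr_fun measurableSet_Ioi this,
      integral_rpow_mul_exp_neg_mul_rpow (by linarith) (by linarith) hb]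
    ring_nf


lemma one_sub_exp_factor_mem {b x : ℝ} (hb : 0 ≤ b) (hx : 0 ≤ x) :
    0 ≤ 1 - Real.exp (-(b * x)) ∧ 1 - Real.exp (-(b * x)) ≤ b * x := by
  constructor
  · have : Real.exp (-(b*x)) ≤ 1 := Real.exp_le_one_iff.2 (neg_nonpos.2 (by positivity))
    linarith
  · linarith [Real.add_one_le_exp (-(b*x))]

lemma f_meas (α b : ℝ) : Measurable (fun r : ℝ => (1 - Real.exp (-(b * r ^ (-α)))) * r) := by
  fun_prop

lemma L1 {α b : ℝ} (hα : 2 < α) (hb : 0 ≤ b) :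
    IntegrableOn (fun r : ℝ => (1 - Real.exp (-(b * r ^ (-α)))) * r) (Ioi 0) ∧
    ∫ r in Ioi (0:ℝ), (1 - Real.exp (-(b * r ^ (-α)))) * r
      = b ^ (2/α) * Real.Gamma (1 - 2/α) / 2 := by
  have hα0 : (0:ℝ) < α := by linarith
  rcases eq_or_lt_of_le hb with rfl | hb
  · have hz : ∀ r : ℝ, (1 - Real.exp (-((0:ℝ) * r ^ (-α)))) * r = 0 := by
      intro r; simp
    constructor
    · simp only [hz]; exact integrableOn_zero
    · rw [Real.zero_rpow (div_pos two_pos hα0).ne']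
      simp [hz]
  -- b > 0 case
  have hfint : IntegrableOn (fun r : ℝ => (1 - Real.exp (-(b * r ^ (-α)))) * r) (Ioi 0) := by
    apply integrableOn_Ioi_of_bounds ((f_meas α b).aestronglyMeasurable) (σ := 1 - α)
      (M := 1) (C := b) (by linarith)
    · intro r hr
      have hr0 : 0 < r := hr.1
      have hx : (0:ℝ) ≤ r ^ (-α) := (rpow_pos_of_pos hr0 _).le
      obtain ⟨h1, h2⟩ := one_sub_exp_factor_mem hb.le hx
      rw [norm_of_nonneg (by positivity)]
      have := Real.exp_pos (-(b * r ^ (-α)))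
      nlinarith [hr.2]
    · intro r hr
      have hr0 : (0:ℝ) < r := lt_trans one_pos hr
      have hx : (0:ℝ) ≤ r ^ (-α) := (rpow_pos_of_pos hr0 _).le
      obtain ⟨h1, h2⟩ := one_sub_exp_factor_mem hb.le hx
      rw [norm_of_nonneg (by positivity)]
      have e1 : r ^ (-α) * r = r ^ (1-α) := by
        rw [show (1-α : ℝ) = -α + 1 by ring, Real.rpow_add hr0, Real.rpow_one]
      nlinarith [e1]
  refine ⟨hfint, ?_⟩
  set f : ℝ → ℝ := fun r => (1 - Real.exp (-(b * r ^ (-α)))) * r with hf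
  set g : ℝ → ℝ := fun r => (b*α/2) * (r ^ (1-α) * Real.exp (-(b * r ^ (-α)))) with hg
  set F : ℝ → ℝ := fun r => (1 - Real.exp (-(b * r ^ (-α)))) * r^2 / 2 with hF
  have hgint : IntegrableOn g (Ioi 0) := ((L2 hα hb).1).const_mul _
  have hderiv : ∀ r ∈ Ioi (0:ℝ), HasDerivAt F (f r - g r) r := by
    intro r hr
    have hr0 : (0:ℝ) < r := hr
    have h1 : HasDerivAt (fun r : ℝ => r ^ (-α)) (-α * r ^ (-α - 1)) r :=
      Real.hasDerivAt_rpow_const (Or.inl hr0.ne')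
    have h3 : HasDerivAt (fun r : ℝ => 1 - Real.exp (-(b * r ^ (-α))))
        (-(Real.exp (-(b * r ^ (-α))) * (-(b * (-α * r ^ (-α - 1)))))) r :=
      (((h1.const_mul b).neg).exp).const_sub 1
    have h4 := (h3.mul ((hasDerivAt_pow 2 r))).div_const 2
    convert h4 using 1
    · rfl
    · rfl
    · rfl
    have e0 : (r:ℝ)^(2:ℕ) = r ^ ((2:ℕ):ℝ) := (Real.rpow_natCast r 2).symm
    have e1 : r ^ (-α - 1) * r ^ (2:ℕ) = r ^ (1-α) := by
      rw [e0, ← Real.rpow_add hr0]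
      congr 1
      push_cast
      ring
    linear_combination (b * α * Real.exp (-(b * r ^ (-α))) / 2) * e1
  have hFcont : ContinuousWithinAt F (Ici 0) 0 := by
    have h0 : F 0 = 0 := by simp [hF]
    rw [ContinuousWithinAt, h0]
    apply tendsto_of_tendsto_of_tendsto_of_le_of_le' (g := fun _ => (0:ℝ))
      (h := fun r : ℝ => r^2/2) tendsto_const_nhds
    · have : Tendsto (fun r : ℝ => r^2/2) (𝓝 0) (𝓝 0) := by
        have := (continuous_pow 2).div_const (2:ℝ)
        simpa using this.tendsto 0
      exact this.mono_left nhdsWithin_le_nhds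
    · filter_upwards [self_mem_nhdsWithin] with r (hr : r ∈ Ici (0:ℝ))
      have hx : (0:ℝ) ≤ r ^ (-α) := Real.rpow_nonneg hr _
      obtain ⟨h1, _⟩ := one_sub_exp_factor_mem hb.le hx
      simp only [hF]
      positivity
    · filter_upwards [self_mem_nhdsWithin] with r (hr : r ∈ Ici (0:ℝ))
      have hx : (0:ℝ) ≤ r ^ (-α) := Real.rpow_nonneg hr _
      obtain ⟨h1, _⟩ := one_sub_exp_factor_mem hb.le hx
      simp only [hF]
      have := Real.exp_pos (-(b * r ^ (-α)))
      nlinarith [sq_nonneg r]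
  have hFtop : Tendsto F atTop (𝓝 0) := by
    apply tendsto_of_tendsto_of_tendsto_of_le_of_le' (g := fun _ => (0:ℝ))
      (h := fun r : ℝ => (b/2) * r^(2-α)) tendsto_const_nhds
    · have h := tendsto_rpow_neg_atTop (y := α - 2) (by linarith)
      have e : (fun r : ℝ => (b/2) * r^(2-α)) = fun r => (b/2) * r ^ (-(α-2)) := by
        funext r; congr 1; ring_nf
      rw [e]
      simpa using (h.const_mul (b/2))
    · filter_upwards [Ioi_mem_atTop (0:ℝ)] with r (hr : 0 < r)
      have hx : (0:ℝ) ≤ r ^ (-α) := (rpow_pos_of_pos hr _).le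
      obtain ⟨h1, _⟩ := one_sub_exp_factor_mem hb.le hx
      simp only [hF]
      positivity
    · filter_upwards [Ioi_mem_atTop (0:ℝ)] with r (hr : 0 < r)
      have hx : (0:ℝ) ≤ r ^ (-α) := (rpow_pos_of_pos hr _).le
      obtain ⟨h1, h2⟩ := one_sub_exp_factor_mem hb.le hx
      simp only [hF]
      have e1 : r ^ (-α) * r ^ (2:ℕ) = r ^ (2-α) := by
        rw [(Real.rpow_natCast r 2).symm, ← Real.rpow_add hr]
        congr 1; push_cast; ring
      nlinarith [sq_nonneg r, e1]
  have hF'int : IntegrableOn (fun r => f r - g r) (Ioi 0) := hfint.sub hgint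
  have hIBP := integral_Ioi_of_hasDerivAt_of_tendsto hFcont hderiv hF'int hFtop
  have hF0 : F 0 = 0 := by simp [hF]
  rw [hF0, sub_zero] at hIBP
  rw [integral_sub hfint hgint, sub_eq_zero] at hIBP
  rw [hIBP]
  have : ∫ r in Ioi (0:ℝ), g r
      = (b*α/2) * ∫ r in Ioi (0:ℝ), r ^ (1-α) * Real.exp (-(b * r ^ (-α))) := by
    simp only [hg]
    exact integral_const_mul _ _
  rw [this, (L2 hα hb).2]
  have harg : -(α-2)/α = -(1 - 2/α) := by field_simp
  have harg2 : (α-2)/α = 1 - 2/α := by field_simp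
  rw [harg, harg2]
  have hbb : b * b ^ (-(1-2/α)) = b ^ (2/α) := by
    nth_rewrite 1 [← Real.rpow_one b]
    rw [← Real.rpow_add hb]
    congr 1
    ring
  calc b*α/2 * (b ^ (-(1-2/α)) * (1/α) * Real.Gamma (1 - 2/α))
      = (b * b ^ (-(1-2/α))) * Real.Gamma (1 - 2/α) * (α * (1/α)) / 2 := by ring
    _ = b ^ (2/α) * Real.Gamma (1 - 2/α) * 1 / 2 := by
        rw [hbb, mul_one_div_cancel hα0.ne']
    _ = b ^ (2/α) * Real.Gamma (1 - 2/α) / 2 := by ring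

lemma expMeasure_Iio_zero : (expMeasure 1) (Iio 0) = 0 := by
  rw [expMeasure, gammaMeasure, withDensity_apply _ measurableSet_Iio]
  rw [setLIntegral_congr_fun measurableSet_Iio
    (fun x (hx : x < 0) => gammaPDF_of_neg hx), lintegral_zero]

lemma expMeasure_ae_nonneg : ∀ᵐ h ∂(expMeasure 1), 0 ≤ h := by
  rw [ae_iff]
  have : {a : ℝ | ¬ 0 ≤ a} = Iio 0 := by ext x; simp [not_le]
  rw [this]
  exact expMeasure_Iio_zero

lemma exp_rpow_lintegral {c : ℝ} (hc0 : 0 < c) :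
    ∫⁻ h, ENNReal.ofReal (h ^ c) ∂(expMeasure 1) = ENNReal.ofReal (Real.Gamma (c+1)) := by
  have hpdfm : Measurable (gammaPDF 1 1) := (measurable_gammaPDFReal 1 1).ennreal_ofReal
  have hrpm : Measurable (fun h : ℝ => h ^ c) := by fun_prop
  rw [expMeasure, gammaMeasure, lintegral_withDensity_eq_lintegral_mul _
    hpdfm hrpm.ennreal_ofReal]
  rw [← lintegral_add_compl (fun a => (gammaPDF 1 1 * fun h => ENNReal.ofReal (h ^ c)) a)
    measurableSet_Iio, compl_Iio]
  have h1 : ∫⁻ a in Iio (0:ℝ), (gammaPDF 1 1 * fun h => ENNReal.ofReal (h ^ c)) a = 0 := by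
    rw [setLIntegral_congr_fun measurableSet_Iio
      (fun x (hx : x < 0) => by
        rw [Pi.mul_apply, gammaPDF_of_neg hx, zero_mul]), lintegral_zero]
  rw [h1, zero_add, setLIntegral_congr (Ioi_ae_eq_Ici (μ := volume) (a := (0:ℝ))).symm]
  have h2 : ∀ x ∈ Ioi (0:ℝ), (gammaPDF 1 1 * fun h => ENNReal.ofReal (h ^ c)) x
      = ENNReal.ofReal (Real.exp (-x) * x ^ ((c+1)-1)) := by
    intro x hx
    have hx0 : (0:ℝ) < x := hx
    rw [Pi.mul_apply, gammaPDF_of_nonneg hx0.le, ← ENNReal.ofReal_mul (by positivity)]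
    congr 1
    rw [Real.Gamma_one]
    simp only [Real.rpow_one, one_mul, Real.one_rpow]
    rw [show (1:ℝ)-1 = 0 by norm_num, Real.rpow_zero, show c+1-1 = c by ring]
    ring
  rw [setLIntegral_congr_fun measurableSet_Ioi h2]
  rw [← ofReal_integral_eq_lintegral_ofReal (Real.GammaIntegral_convergent (by linarith))
    ((ae_restrict_iff' measurableSet_Ioi).2 (ae_of_all _ (fun x (hx : 0 < x) => by positivity)))]
  rw [← Real.Gamma_eq_integral (by linarith)]

noncomputable def sinc (x : ℝ) : ℝ := Real.sin (π * x) / (π * x)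

theorem radial_interference_integral
    (lam α s : ℝ) (hlam : 0 < lam) (hα : 2 < α) (hs : 0 < s)
    (ν : Measure ℝ) [IsProbabilityMeasure ν] (hν : ν (Set.Ici (0:ℝ))ᶜ = 0)
    (hmom : Integrable (fun p : ℝ => p ^ (2 / α)) ν) :
    ∫ r in Set.Ioi (0:ℝ),
        (1 - ∫ p, ∫ h, Real.exp (-(s * p * h * r ^ (-α))) ∂(expMeasure 1) ∂ν) *
          (2 * π * lam * r) =
      π * lam / _root_.sinc (2 / α) * (∫ p, p ^ (2 / α) ∂ν) * s ^ (2 / α) := by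
  haveI hPexp : IsProbabilityMeasure (expMeasure 1) := isProbabilityMeasure_expMeasure one_pos
  have hα0 : (0:ℝ) < α := by linarith
  have hc0 : (0:ℝ) < 2/α := div_pos two_pos hα0
  have hc1 : 2/α < 1 := by rw [div_lt_one hα0]; linarith
  set μ : Measure (ℝ × ℝ) := ν.prod (expMeasure 1) with hμ
  haveI : IsProbabilityMeasure μ := by rw [hμ]; infer_instance
  have hpae : ∀ᵐ p ∂ν, 0 ≤ p := by
    rw [ae_iff]
    have h : {a : ℝ | ¬ 0 ≤ a} = (Ici (0:ℝ))ᶜ := by ext x; simp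
    rw [h]; exact hν
  have hqae : ∀ᵐ q ∂μ, 0 ≤ q.1 ∧ 0 ≤ q.2 := by
    rw [ae_iff]
    have hsub : {q : ℝ × ℝ | ¬ (0 ≤ q.1 ∧ 0 ≤ q.2)}
        ⊆ ((Ici (0:ℝ))ᶜ ×ˢ (univ : Set ℝ)) ∪ ((univ : Set ℝ) ×ˢ (Iio (0:ℝ))) := by
      intro q hq
      simp only [Set.mem_setOf_eq, not_and_or, not_le] at hq
      rcases hq with h | h
      · exact Or.inl ⟨by simpa using h, Set.mem_univ _⟩
      · exact Or.inr ⟨Set.mem_univ _, h⟩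
    refine measure_mono_null hsub (measure_union_null ?_ ?_)
    · rw [hμ, Measure.prod_prod, hν, zero_mul]
    · rw [hμ, Measure.prod_prod, expMeasure_Iio_zero, mul_zero]
  have hmeas : Measurable (fun z : ℝ × (ℝ × ℝ) =>
      (1 - Real.exp (-(s * z.2.1 * z.2.2 * z.1 ^ (-α)))) * (2 * π * lam * z.1)) := by fun_prop
  -- Step A
  have stepA : ∀ r ∈ Ioi (0:ℝ),
      (1 - ∫ p, ∫ h, Real.exp (-(s * p * h * r ^ (-α))) ∂(expMeasure 1) ∂ν) * (2 * π * lam * r)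
      = ∫ q, (1 - Real.exp (-(s * q.1 * q.2 * r ^ (-α)))) * (2 * π * lam * r) ∂μ := by
    intro r hr
    have hr0 : (0:ℝ) < r := hr
    have ht : (0:ℝ) < r ^ (-α) := rpow_pos_of_pos hr0 _
    have hint : Integrable (fun q : ℝ × ℝ => Real.exp (-(s * q.1 * q.2 * r ^ (-α)))) μ := by
      apply Integrable.mono' (integrable_const (1:ℝ))
      · exact (by fun_prop : Measurable (fun q : ℝ × ℝ =>
          Real.exp (-(s * q.1 * q.2 * r ^ (-α))))).aestronglyMeasurable
      · filter_upwards [hqae] with q hq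
        obtain ⟨h1, h2⟩ := hq
        rw [norm_of_nonneg (Real.exp_pos _).le, Real.exp_le_one_iff]
        have : 0 ≤ s * q.1 * q.2 * r ^ (-α) := by positivity
        linarith
    have h1 : ∫ q, (1 - Real.exp (-(s * q.1 * q.2 * r ^ (-α)))) * (2 * π * lam * r) ∂μ
        = (∫ q, (1 - Real.exp (-(s * q.1 * q.2 * r ^ (-α)))) ∂μ) * (2 * π * lam * r) :=
      integral_mul_const _ _
    have h2 : ∫ q, (1 - Real.exp (-(s * q.1 * q.2 * r ^ (-α)))) ∂μ
        = 1 - ∫ q, Real.exp (-(s * q.1 * q.2 * r ^ (-α))) ∂μ := by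
      rw [integral_sub (integrable_const 1) hint]
      simp
    have h3 : ∫ q, Real.exp (-(s * q.1 * q.2 * r ^ (-α))) ∂μ
        = ∫ p, ∫ h, Real.exp (-(s * p * h * r ^ (-α))) ∂(expMeasure 1) ∂ν :=
      integral_prod _ hint
    rw [h1, h2, h3]
  rw [setIntegral_congr_fun measurableSet_Ioi (fun r hr => stepA r hr)]
  -- nonnegativity of the inner integral
  have hΦnonneg : ∀ r ∈ Ioi (0:ℝ), ∀ᵐ q ∂μ,
      0 ≤ (1 - Real.exp (-(s * q.1 * q.2 * r ^ (-α)))) * (2 * π * lam * r) := by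
    intro r hr
    have hr0 : (0:ℝ) < r := hr
    filter_upwards [hqae] with q hq
    obtain ⟨h1, h2⟩ := hq
    have hx : (0:ℝ) ≤ r ^ (-α) := (rpow_pos_of_pos hr0 _).le
    have hfac := (one_sub_exp_factor_mem (show (0:ℝ) ≤ s * q.1 * q.2 by positivity) hx).1
    have : (0:ℝ) ≤ 2 * π * lam * r := by positivity
    exact mul_nonneg hfac this
  have hnn : 0 ≤ᵐ[volume.restrict (Ioi (0:ℝ))] fun r =>
      ∫ q, (1 - Real.exp (-(s * q.1 * q.2 * r ^ (-α)))) * (2 * π * lam * r) ∂μ :=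
    (ae_restrict_iff' measurableSet_Ioi).2
      (ae_of_all _ (fun r hr => integral_nonneg_of_ae (hΦnonneg r hr)))
  have hASM : AEStronglyMeasurable (fun r =>
      ∫ q, (1 - Real.exp (-(s * q.1 * q.2 * r ^ (-α)))) * (2 * π * lam * r) ∂μ)
      (volume.restrict (Ioi (0:ℝ))) :=
    (hmeas.stronglyMeasurable.integral_prod_right').aestronglyMeasurable
  rw [integral_eq_lintegral_of_nonneg_ae hnn hASM]
  -- swap to lintegrals
  have swap1 : ∫⁻ r in Ioi (0:ℝ), ENNReal.ofReal
        (∫ q, (1 - Real.exp (-(s * q.1 * q.2 * r ^ (-α)))) * (2 * π * lam * r) ∂μ)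
      = ∫⁻ r in Ioi (0:ℝ), ∫⁻ q, ENNReal.ofReal
        ((1 - Real.exp (-(s * q.1 * q.2 * r ^ (-α)))) * (2 * π * lam * r)) ∂μ := by
    apply lintegral_congr_ae
    filter_upwards [ae_restrict_mem measurableSet_Ioi] with r hr
    have hr0 : (0:ℝ) < r := hr
    apply ofReal_integral_eq_lintegral_ofReal
    · apply Integrable.mono' (integrable_const (2 * π * lam * r))
      · exact (by fun_prop : Measurable (fun q : ℝ × ℝ =>
          (1 - Real.exp (-(s * q.1 * q.2 * r ^ (-α)))) * (2 * π * lam * r))).aestronglyMeasurable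
      · filter_upwards [hqae] with q hq
        obtain ⟨h1, h2⟩ := hq
        have hx : (0:ℝ) ≤ r ^ (-α) := (rpow_pos_of_pos hr0 _).le
        obtain ⟨hf1, _⟩ := one_sub_exp_factor_mem
          (show (0:ℝ) ≤ s * q.1 * q.2 by positivity) hx
        have hC : (0:ℝ) ≤ 2 * π * lam * r := by positivity
        rw [norm_of_nonneg (mul_nonneg hf1 hC)]
        have hle : 1 - Real.exp (-(s * q.1 * q.2 * r ^ (-α))) ≤ 1 := by
          have := Real.exp_pos (-(s * q.1 * q.2 * r ^ (-α)))
          linarith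
        nlinarith
    · exact hΦnonneg r hr
  rw [swap1]
  have swap2 : ∫⁻ r in Ioi (0:ℝ), ∫⁻ q, ENNReal.ofReal
        ((1 - Real.exp (-(s * q.1 * q.2 * r ^ (-α)))) * (2 * π * lam * r)) ∂μ
      = ∫⁻ q : ℝ × ℝ, (∫⁻ r in Ioi (0:ℝ), ENNReal.ofReal
        ((1 - Real.exp (-(s * q.1 * q.2 * r ^ (-α)))) * (2 * π * lam * r))) ∂μ := by
    apply lintegral_lintegral_swap
    exact (hmeas.ennreal_ofReal).aemeasurable
  rw [swap2]
  -- evaluate the inner radial lintegral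
  have hA0 : (0:ℝ) ≤ π * lam * Real.Gamma (1 - 2/α) * s ^ (2/α) := by
    have := Real.Gamma_pos_of_pos (show (0:ℝ) < 1 - 2/α by linarith)
    positivity
  have hval : ∀ᵐ q ∂μ, (∫⁻ r in Ioi (0:ℝ), ENNReal.ofReal
        ((1 - Real.exp (-(s * q.1 * q.2 * r ^ (-α)))) * (2 * π * lam * r)))
      = ENNReal.ofReal (π * lam * Real.Gamma (1 - 2/α) * s ^ (2/α))
        * (ENNReal.ofReal (q.1 ^ (2/α)) * ENNReal.ofReal (q.2 ^ (2/α))) := by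
    filter_upwards [hqae] with q hq
    obtain ⟨hq1, hq2⟩ := hq
    have hb : (0:ℝ) ≤ s * q.1 * q.2 := by positivity
    obtain ⟨hbint, hbval⟩ := L1 hα hb
    have e1 : ∀ r ∈ Ioi (0:ℝ),
        ENNReal.ofReal ((1 - Real.exp (-(s * q.1 * q.2 * r ^ (-α)))) * (2 * π * lam * r))
        = ENNReal.ofReal ((2 * π * lam) * ((1 - Real.exp (-(s * q.1 * q.2 * r ^ (-α)))) * r)) := by
      intro r hr; congr 1; ring
    rw [setLIntegral_congr_fun measurableSet_Ioi e1]
    have hnn2 : 0 ≤ᵐ[volume.restrict (Ioi (0:ℝ))] fun r =>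
        (2 * π * lam) * ((1 - Real.exp (-(s * q.1 * q.2 * r ^ (-α)))) * r) :=
      (ae_restrict_iff' measurableSet_Ioi).2 (ae_of_all _ (fun r hr => by
        have hr0 : (0:ℝ) < r := hr
        have hx : (0:ℝ) ≤ r ^ (-α) := (rpow_pos_of_pos hr0 _).le
        obtain ⟨hf1, _⟩ := one_sub_exp_factor_mem hb hx
        positivity))
    rw [← ofReal_integral_eq_lintegral_ofReal (hbint.const_mul _) hnn2]
    rw [integral_const_mul, hbval]
    rw [← ENNReal.ofReal_mul (by positivity), ← ENNReal.ofReal_mul hA0]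
    congr 1
    rw [Real.mul_rpow (mul_nonneg hs.le hq1) hq2, Real.mul_rpow hs.le hq1]
    ring
  rw [lintegral_congr_ae hval]
  have hEp0 : (0:ℝ) ≤ ∫ p, p ^ (2/α) ∂ν := by
    apply integral_nonneg_of_ae
    filter_upwards [hpae] with p hp
    exact Real.rpow_nonneg hp _
  have hrpm : Measurable (fun x : ℝ => x ^ (2/α)) := by fun_prop
  have hsplit : ∫⁻ q : ℝ × ℝ, ENNReal.ofReal (π * lam * Real.Gamma (1 - 2/α) * s ^ (2/α))
        * (ENNReal.ofReal (q.1 ^ (2/α)) * ENNReal.ofReal (q.2 ^ (2/α))) ∂μ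
      = ENNReal.ofReal (π * lam * Real.Gamma (1 - 2/α) * s ^ (2/α))
        * ((∫⁻ p, ENNReal.ofReal (p ^ (2/α)) ∂ν)
          * (∫⁻ h, ENNReal.ofReal (h ^ (2/α)) ∂(expMeasure 1))) := by
    have hmm2 : Measurable (fun q : ℝ × ℝ =>
        ENNReal.ofReal (q.1 ^ (2/α)) * ENNReal.ofReal (q.2 ^ (2/α))) :=
      ((hrpm.comp measurable_fst).ennreal_ofReal).mul
        ((hrpm.comp measurable_snd).ennreal_ofReal)
    rw [lintegral_const_mul _ hmm2]
    congr 1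
    exact lintegral_prod_mul (hrpm.ennreal_ofReal.aemeasurable) (hrpm.ennreal_ofReal.aemeasurable)
  rw [hsplit]
  have hEp : ∫⁻ p, ENNReal.ofReal (p ^ (2/α)) ∂ν = ENNReal.ofReal (∫ p, p ^ (2/α) ∂ν) :=
    (ofReal_integral_eq_lintegral_ofReal hmom
      (by filter_upwards [hpae] with p hp; exact Real.rpow_nonneg hp _)).symm
  rw [hEp, exp_rpow_lintegral hc0]
  rw [← ENNReal.ofReal_mul hEp0, ← ENNReal.ofReal_mul hA0, ENNReal.toReal_ofReal
    (by positivity)]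
  have hsin : 0 < Real.sin (π * (2/α)) := by
    apply Real.sin_pos_of_pos_of_lt_pi
    · positivity
    · nlinarith [Real.pi_pos]
  have hadd : Real.Gamma (2/α + 1) = (2/α) * Real.Gamma (2/α) := Real.Gamma_add_one hc0.ne'
  have hrefl := Real.Gamma_mul_Gamma_one_sub (2/α)
  have key : Real.Gamma (1 - 2/α) * Real.Gamma (2/α + 1) = π * (2/α) / Real.sin (π * (2/α)) := by
    rw [hadd]
    calc Real.Gamma (1 - 2/α) * ((2/α) * Real.Gamma (2/α))
        = (2/α) * (Real.Gamma (2/α) * Real.Gamma (1 - 2/α)) := by ring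
      _ = (2/α) * (π / Real.sin (π * (2/α))) := by rw [hrefl]
      _ = π * (2/α) / Real.sin (π * (2/α)) := by ring
  have hsinc : _root_.sinc (2/α) = Real.sin (π * (2/α)) / (π * (2/α)) := rfl
  rw [hsinc, div_div_eq_mul_div]
  calc π * lam * Real.Gamma (1 - 2/α) * s ^ (2/α) * ((∫ p, p ^ (2/α) ∂ν) * Real.Gamma (2/α + 1))
      = (Real.Gamma (1 - 2/α) * Real.Gamma (2/α + 1)) * (π * lam)
        * (∫ p, p ^ (2/α) ∂ν) * s ^ (2/α) := by ring
    _ = (π * (2/α) / Real.sin (π * (2/α))) * (π * lam)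
        * (∫ p, p ^ (2/α) ∂ν) * s ^ (2/α) := by rw [key]
    _ = (π * lam * (π * (2/α)) / Real.sin (π * (2/α)) * ∫ p, p ^ (2/α) ∂ν) * s ^ (2/α) := by
        ring
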